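/- Let M̄ = M₁ ×_f M₂ be a twisted product of (M₁,g) and (M₂,h) with twisting function f and dim M₂ > 1. Then Ric̄(∂ᵢ, ∂_α) = 0 for all ∂ᵢ tangent to M₁ and ∂_α tangent to M₂ if and only if M₁ ×_f M₂ can be expressed as a warped product M₁ ×_ψ M₂ of (M₁,g) and (M₂, h̃) with warping function ψ depending only on M₁, where h̃ is conformal to h. -/

import Mathlib

noncomputable section

open Matrix

variable {ι : Type*} [Fintype ι] [DecidableEq ι]

/-- Partial derivative in the `i`-th coordinate direction. -/
def pd (i : ι) (φ : (ι → ℝ) → ℝ) (x : ι → ℝ) : ℝ :=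
  fderiv ℝ φ x (Pi.single i 1)

/-- Christoffel symbols `Γ^k_{ij}` of a coordinate metric. -/
def christoffel (g : (ι → ℝ) → Matrix ι ι ℝ) (k i j : ι) (x : ι → ℝ) : ℝ :=
  (1 / 2) * ∑ l, (g x)⁻¹ k l *
    (pd i (fun y => g y l j) x + pd j (fun y => g y l i) x - pd l (fun y => g y i j) x)

/-- Ricci curvature components `R_{ij}` of a coordinate metric. -/
def ricci (g : (ι → ℝ) → Matrix ι ι ℝ) (i j : ι) (x : ι → ℝ) : ℝ :=
  (∑ k, (pd k (christoffel g k i j) x - pd j (christoffel g k i k) x))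
  + ∑ k, ∑ l, (christoffel g k k l x * christoffel g l i j x
      - christoffel g k j l x * christoffel g l i k x)

/-- Scalar curvature of a coordinate metric. -/
def scalarCurv (g : (ι → ℝ) → Matrix ι ι ℝ) (x : ι → ℝ) : ℝ :=
  ∑ i, ∑ j, (g x)⁻¹ i j * ricci g i j x

/-- Hessian `H_φ(∂_i,∂_j)` with respect to the Levi-Civita connection of `g`. -/
def hess (g : (ι → ℝ) → Matrix ι ι ℝ) (φ : (ι → ℝ) → ℝ) (i j : ι) (x : ι → ℝ) : ℝ :=
  pd i (pd j φ) x - ∑ k, christoffel g k i j x * pd k φ x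

/-- Laplace–Beltrami operator of `g`. -/
def laplacian (g : (ι → ℝ) → Matrix ι ι ℝ) (φ : (ι → ℝ) → ℝ) (x : ι → ℝ) : ℝ :=
  ∑ i, ∑ j, (g x)⁻¹ i j * hess g φ i j x

/-- Inner product of gradients `g(∇φ,∇ψ)`. -/
def gradInner (g : (ι → ℝ) → Matrix ι ι ℝ) (φ ψ : (ι → ℝ) → ℝ) (x : ι → ℝ) : ℝ :=
  ∑ i, ∑ j, (g x)⁻¹ i j * pd i φ x * pd j ψ x

/-- Einstein tensor `G_{ij} = R_{ij} - (1/2) S g_{ij}`. -/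
def einstein (g : (ι → ℝ) → Matrix ι ι ℝ) (i j : ι) (x : ι → ℝ) : ℝ :=
  ricci g i j x - (1 / 2) * scalarCurv g x * g x i j

/-- A (pseudo-Riemannian) coordinate metric: symmetric, everywhere invertible and smooth. -/
def IsMetric (g : (ι → ℝ) → Matrix ι ι ℝ) : Prop :=
  (∀ x, (g x).IsSymm) ∧ (∀ x, IsUnit (g x).det) ∧
    ∀ i j, ContDiff ℝ (⊤ : ℕ∞) (fun x => g x i j)

/-- A Riemannian coordinate metric. -/
def IsRiemannMetric (g : (ι → ℝ) → Matrix ι ι ℝ) : Prop :=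
  (∀ x, (g x).PosDef) ∧ ∀ i j, ContDiff ℝ (⊤ : ℕ∞) (fun x => g x i j)

/-- The twisted product metric `ḡ = g ⊕ f²h` on `M₁ × M₂`, where the twisting
function `f` may depend on the points of both factors. -/
def twistedMetric {m n : ℕ} (g : (Fin m → ℝ) → Matrix (Fin m) (Fin m) ℝ)
    (h : (Fin n → ℝ) → Matrix (Fin n) (Fin n) ℝ)
    (f : ((Fin m ⊕ Fin n) → ℝ) → ℝ) :
    ((Fin m ⊕ Fin n) → ℝ) → Matrix (Fin m ⊕ Fin n) (Fin m ⊕ Fin n) ℝ :=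
  fun x => Matrix.fromBlocks (g (x ∘ Sum.inl)) 0 0 ((f x) ^ 2 • h (x ∘ Sum.inr))


/-! ### Auxiliary lemmas -/

section Aux

variable {E : Type*} [NormedAddCommGroup E] [NormedSpace ℝ E]

lemma cd_diff {φ : E → ℝ} (h : ContDiff ℝ (⊤:ℕ∞) φ) : Differentiable ℝ φ :=
  h.differentiable (by simp)

lemma contDiff_finset_prod {β : Type*} {s : Finset β} {F : β → E → ℝ}
    (h : ∀ b ∈ s, ContDiff ℝ (⊤:ℕ∞) (F b)) : ContDiff ℝ (⊤:ℕ∞) fun x => ∏ b ∈ s, F b x := by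
  classical
  induction s using Finset.induction with
  | empty => simpa using contDiff_const
  | @insert a s2 hb ih =>
    simp only [Finset.prod_insert hb]
    exact (h a (by simp)).mul (ih fun b hbs => h b (by simp [hbs]))

lemma contDiff_pd {φ : (ι → ℝ) → ℝ} (hφ : ContDiff ℝ (⊤:ℕ∞) φ) (i : ι) :
    ContDiff ℝ (⊤:ℕ∞) (pd i φ) :=
  (hφ.fderiv_right (m := (⊤:ℕ∞)) (by exact_mod_cast le_top)).clm_apply contDiff_const

lemma pd_const (i : ι) (c : ℝ) (x : ι → ℝ) : pd i (fun _ => c) x = 0 := by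
  simp [pd]

lemma pd_mul {φ ψ : (ι → ℝ) → ℝ} (i : ι) (x : ι → ℝ)
    (hφ : DifferentiableAt ℝ φ x) (hψ : DifferentiableAt ℝ ψ x) :
    pd i (fun y => φ y * ψ y) x = pd i φ x * ψ x + φ x * pd i ψ x := by
  simp only [pd, fderiv_fun_mul hφ hψ, ContinuousLinearMap.add_apply,
    ContinuousLinearMap.smul_apply, smul_eq_mul]
  ring

lemma pd_sum {β : Type*} {s : Finset β} {F : β → (ι → ℝ) → ℝ} (i : ι) (x : ι → ℝ)
    (h : ∀ b ∈ s, DifferentiableAt ℝ (F b) x) :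
    pd i (fun y => ∑ b ∈ s, F b y) x = ∑ b ∈ s, pd i (F b) x := by
  simp only [pd, fderiv_fun_sum h]
  simp

lemma contDiff_det' {A : E → Matrix ι ι ℝ} (hA : ∀ i j, ContDiff ℝ (⊤:ℕ∞) fun x => A x i j) :
    ContDiff ℝ (⊤:ℕ∞) fun x => (A x).det := by
  simp only [Matrix.det_apply]
  apply ContDiff.sum
  intro σ _
  simp only [Units.smul_def, zsmul_eq_mul]
  exact contDiff_const.mul (contDiff_finset_prod fun b _ => hA (σ b) b)

lemma contDiff_adjugate {A : E → Matrix ι ι ℝ}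
    (hA : ∀ i j, ContDiff ℝ (⊤:ℕ∞) fun x => A x i j) (i j : ι) :
    ContDiff ℝ (⊤:ℕ∞) fun x => (A x).adjugate i j := by
  simp only [Matrix.adjugate_apply]
  apply contDiff_det'
  intro a b
  by_cases hc : a = j
  · simp only [Matrix.updateRow_apply, hc, if_pos rfl]
    exact contDiff_const
  · simp only [Matrix.updateRow_apply, if_neg hc]
    exact hA a b

lemma contDiff_inv_entry {A : E → Matrix ι ι ℝ}
    (hA : ∀ i j, ContDiff ℝ (⊤:ℕ∞) fun x => A x i j) (hdet : ∀ x, IsUnit (A x).det) (i j : ι) :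
    ContDiff ℝ (⊤:ℕ∞) fun x => (A x)⁻¹ i j := by
  have e : (fun x => (A x)⁻¹ i j) = fun x => ((A x).det)⁻¹ * (A x).adjugate i j := by
    funext x
    rw [Matrix.inv_def]
    simp [Ring.inverse_eq_inv']
  rw [e]
  exact ((contDiff_det' hA).inv fun x => (hdet x).ne_zero).mul (contDiff_adjugate hA i j)

lemma contDiff_christoffel {g : (ι → ℝ) → Matrix ι ι ℝ} (hg : IsMetric g) (k i j : ι) :
    ContDiff ℝ (⊤:ℕ∞) (christoffel g k i j) := by
  unfold christoffel
  apply ContDiff.mul contDiff_const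
  apply ContDiff.sum
  intro l _
  exact (contDiff_inv_entry hg.2.2 hg.2.1 k l).mul
    (((contDiff_pd (hg.2.2 l j) i).add (contDiff_pd (hg.2.2 l i) j)).sub
      (contDiff_pd (hg.2.2 i j) l))

lemma christoffel_symm {g : (ι → ℝ) → Matrix ι ι ℝ} {i j : ι} (k : ι) (x : ι → ℝ)
    (hsym : ∀ y, g y i j = g y j i) :
    christoffel g k i j x = christoffel g k j i x := by
  unfold christoffel
  congr 1
  apply Finset.sum_congr rfl
  intro l _
  have e : (fun y => g y i j) = fun y => g y j i := funext hsym
  rw [e]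
  ring

end Aux

section Proj

variable {m n : ℕ}

def prL : ((Fin m ⊕ Fin n) → ℝ) →L[ℝ] (Fin m → ℝ) :=
  ContinuousLinearMap.pi fun i => ContinuousLinearMap.proj (Sum.inl i)
def prR : ((Fin m ⊕ Fin n) → ℝ) →L[ℝ] (Fin n → ℝ) :=
  ContinuousLinearMap.pi fun α => ContinuousLinearMap.proj (Sum.inr α)

lemma prL_single_inl (i : Fin m) :
    prL (n := n) (Pi.single (Sum.inl i) 1) = Pi.single i 1 := by
  funext j
  simp [prL, Pi.single_apply]
lemma prL_single_inr (α : Fin n) :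
    prL (m := m) (Pi.single (Sum.inr α) 1) = 0 := by
  funext j
  simp [prL, Pi.single_apply]
lemma prR_single_inr (α : Fin n) :
    prR (m := m) (Pi.single (Sum.inr α) 1) = Pi.single α 1 := by
  funext j
  simp [prR, Pi.single_apply]
lemma prR_single_inl (i : Fin m) :
    prR (n := n) (Pi.single (Sum.inl i) 1) = 0 := by
  funext j
  simp [prR, Pi.single_apply]

lemma pd_inl_comp {F : (Fin m → ℝ) → ℝ} (i : Fin m) (x : (Fin m ⊕ Fin n) → ℝ)
    (hF : DifferentiableAt ℝ F (x ∘ Sum.inl)) :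
    pd (Sum.inl i) (fun y => F (y ∘ Sum.inl)) x = pd i F (x ∘ Sum.inl) := by
  have e : (fun y : (Fin m ⊕ Fin n) → ℝ => F (y ∘ Sum.inl)) = F ∘ prL := rfl
  rw [pd, e, fderiv_comp x (by exact hF) prL.differentiableAt, prL.fderiv,
    ContinuousLinearMap.comp_apply, prL_single_inl]
  rfl

lemma pd_inr_comp_left {F : (Fin m → ℝ) → ℝ} (α : Fin n) (x : (Fin m ⊕ Fin n) → ℝ)
    (hF : DifferentiableAt ℝ F (x ∘ Sum.inl)) :
    pd (Sum.inr α) (fun y => F (y ∘ Sum.inl)) x = 0 := by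
  have e : (fun y : (Fin m ⊕ Fin n) → ℝ => F (y ∘ Sum.inl)) = F ∘ prL := rfl
  rw [pd, e, fderiv_comp x (by exact hF) prL.differentiableAt, prL.fderiv,
    ContinuousLinearMap.comp_apply, prL_single_inr, map_zero]

lemma pd_inr_comp {F : (Fin n → ℝ) → ℝ} (α : Fin n) (x : (Fin m ⊕ Fin n) → ℝ)
    (hF : DifferentiableAt ℝ F (x ∘ Sum.inr)) :
    pd (Sum.inr α) (fun y => F (y ∘ Sum.inr)) x = pd α F (x ∘ Sum.inr) := by
  have e : (fun y : (Fin m ⊕ Fin n) → ℝ => F (y ∘ Sum.inr)) = F ∘ prR := rfl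
  rw [pd, e, fderiv_comp x (by exact hF) prR.differentiableAt, prR.fderiv,
    ContinuousLinearMap.comp_apply, prR_single_inr]
  rfl

lemma pd_inl_comp_right {F : (Fin n → ℝ) → ℝ} (i : Fin m) (x : (Fin m ⊕ Fin n) → ℝ)
    (hF : DifferentiableAt ℝ F (x ∘ Sum.inr)) :
    pd (Sum.inl i) (fun y => F (y ∘ Sum.inr)) x = 0 := by
  have e : (fun y : (Fin m ⊕ Fin n) → ℝ => F (y ∘ Sum.inr)) = F ∘ prR := rfl
  rw [pd, e, fderiv_comp x (by exact hF) prR.differentiableAt, prR.fderiv,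
    ContinuousLinearMap.comp_apply, prR_single_inl, map_zero]

end Proj

section Twisted

variable {m n : ℕ} {g : (Fin m → ℝ) → Matrix (Fin m) (Fin m) ℝ}
    {h : (Fin n → ℝ) → Matrix (Fin n) (Fin n) ℝ}
    {f : ((Fin m ⊕ Fin n) → ℝ) → ℝ}

lemma tm_11 (i j : Fin m) :
    (fun y => twistedMetric g h f y (Sum.inl i) (Sum.inl j)) = fun y => g (y ∘ Sum.inl) i j := rfl
lemma tm_12 (i : Fin m) (α : Fin n) :
    (fun y => twistedMetric g h f y (Sum.inl i) (Sum.inr α)) = fun _ => (0:ℝ) := by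
  funext y; simp [twistedMetric]
lemma tm_21 (α : Fin n) (i : Fin m) :
    (fun y => twistedMetric g h f y (Sum.inr α) (Sum.inl i)) = fun _ => (0:ℝ) := by
  funext y; simp [twistedMetric]
lemma tm_22 (α β : Fin n) :
    (fun y => twistedMetric g h f y (Sum.inr α) (Sum.inr β))
      = fun y => f y ^ 2 * h (y ∘ Sum.inr) α β := by
  funext y; simp [twistedMetric]

lemma twisted_inv (hgdet : ∀ u, IsUnit (g u).det) (hhdet : ∀ v, IsUnit (h v).det)
    (hfpos : ∀ x, 0 < f x) (x : (Fin m ⊕ Fin n) → ℝ) :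
    (twistedMetric g h f x)⁻¹
      = Matrix.fromBlocks (g (x ∘ Sum.inl))⁻¹ 0 0 (((f x) ^ 2)⁻¹ • (h (x ∘ Sum.inr))⁻¹) := by
  apply Matrix.inv_eq_right_inv
  rw [twistedMetric, Matrix.fromBlocks_multiply]
  have h2 : (f x ^ 2 • h (x ∘ Sum.inr)) * ((f x ^ 2)⁻¹ • (h (x ∘ Sum.inr))⁻¹) = 1 := by
    rw [Matrix.smul_mul, Matrix.mul_smul, smul_smul,
      mul_inv_cancel₀ (pow_ne_zero 2 (hfpos x).ne'), one_smul,
      Matrix.mul_nonsing_inv _ (hhdet _)]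
  simp [Matrix.mul_nonsing_inv _ (hgdet _), h2, Matrix.fromBlocks_one]

lemma tinv_11 (hgdet : ∀ u, IsUnit (g u).det) (hhdet : ∀ v, IsUnit (h v).det)
    (hfpos : ∀ x, 0 < f x) (x : (Fin m ⊕ Fin n) → ℝ) (k l : Fin m) :
    (twistedMetric g h f x)⁻¹ (Sum.inl k) (Sum.inl l) = (g (x ∘ Sum.inl))⁻¹ k l := by
  rw [twisted_inv hgdet hhdet hfpos]; rfl
lemma tinv_12 (hgdet : ∀ u, IsUnit (g u).det) (hhdet : ∀ v, IsUnit (h v).det)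
    (hfpos : ∀ x, 0 < f x) (x : (Fin m ⊕ Fin n) → ℝ) (k : Fin m) (δ : Fin n) :
    (twistedMetric g h f x)⁻¹ (Sum.inl k) (Sum.inr δ) = 0 := by
  rw [twisted_inv hgdet hhdet hfpos]; rfl
lemma tinv_21 (hgdet : ∀ u, IsUnit (g u).det) (hhdet : ∀ v, IsUnit (h v).det)
    (hfpos : ∀ x, 0 < f x) (x : (Fin m ⊕ Fin n) → ℝ) (γ : Fin n) (k : Fin m) :
    (twistedMetric g h f x)⁻¹ (Sum.inr γ) (Sum.inl k) = 0 := by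
  rw [twisted_inv hgdet hhdet hfpos]; rfl
lemma tinv_22 (hgdet : ∀ u, IsUnit (g u).det) (hhdet : ∀ v, IsUnit (h v).det)
    (hfpos : ∀ x, 0 < f x) (x : (Fin m ⊕ Fin n) → ℝ) (γ δ : Fin n) :
    (twistedMetric g h f x)⁻¹ (Sum.inr γ) (Sum.inr δ)
      = ((f x) ^ 2)⁻¹ * (h (x ∘ Sum.inr))⁻¹ γ δ := by
  rw [twisted_inv hgdet hhdet hfpos]; rfl

end Twisted

section ChristoffelTwisted

variable {m n : ℕ} {g : (Fin m → ℝ) → Matrix (Fin m) (Fin m) ℝ}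
    {h : (Fin n → ℝ) → Matrix (Fin n) (Fin n) ℝ}
    {f : ((Fin m ⊕ Fin n) → ℝ) → ℝ}

lemma pd_g_inr (hg : IsMetric g) (α : Fin n) (l i : Fin m) (x : (Fin m ⊕ Fin n) → ℝ) :
    pd (Sum.inr α) (fun y => g (y ∘ Sum.inl) l i) x = 0 :=
  pd_inr_comp_left α x (cd_diff (hg.2.2 l i) _)

lemma pd_g_inl (hg : IsMetric g) (k : Fin m) (l i : Fin m) (x : (Fin m ⊕ Fin n) → ℝ) :
    pd (Sum.inl k) (fun y => g (y ∘ Sum.inl) l i) x = pd k (fun u => g u l i) (x ∘ Sum.inl) :=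
  pd_inl_comp k x (cd_diff (hg.2.2 l i) _)

lemma diff_h_comp (hh : IsMetric h) (δ α : Fin n) (x : (Fin m ⊕ Fin n) → ℝ) :
    DifferentiableAt ℝ (fun y : (Fin m ⊕ Fin n) → ℝ => h (y ∘ Sum.inr) δ α) x :=
  DifferentiableAt.comp x (cd_diff (hh.2.2 δ α) _) prR.differentiableAt

lemma pd_f2h_inl (hh : IsMetric h) (hf : ContDiff ℝ (⊤:ℕ∞) f)
    (i : Fin m) (δ α : Fin n) (x : (Fin m ⊕ Fin n) → ℝ) :
    pd (Sum.inl i) (fun y => f y ^ 2 * h (y ∘ Sum.inr) δ α) x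
      = 2 * f x * pd (Sum.inl i) f x * h (x ∘ Sum.inr) δ α := by
  have e : (fun y : (Fin m ⊕ Fin n) → ℝ => f y ^ 2 * h (y ∘ Sum.inr) δ α)
      = fun y => (f y * f y) * h (y ∘ Sum.inr) δ α := by
    funext y; ring
  rw [e, pd_mul (φ := fun y => f y * f y) _ _ ((cd_diff hf x).mul (cd_diff hf x)) (diff_h_comp hh δ α x),
    pd_mul _ _ (cd_diff hf x) (cd_diff hf x),
    pd_inl_comp_right i x (cd_diff (hh.2.2 δ α) _)]
  ring

lemma chr_C1 (hg : IsMetric g) (hh : IsMetric h) (hfpos : ∀ x, 0 < f x)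
    (k i : Fin m) (α : Fin n) (x : (Fin m ⊕ Fin n) → ℝ) :
    christoffel (twistedMetric g h f) (Sum.inl k) (Sum.inl i) (Sum.inr α) x = 0 := by
  unfold christoffel
  rw [Fintype.sum_sum_type]
  simp only [tm_11, tm_12, tinv_12 hg.2.1 hh.2.1 hfpos, pd_const, pd_g_inr hg,
    zero_mul, mul_zero, add_zero, zero_add, sub_zero, zero_sub, neg_zero,
    Finset.sum_const_zero]

lemma chr_C1' (hg : IsMetric g) (hh : IsMetric h) (hfpos : ∀ x, 0 < f x)
    (k i : Fin m) (α : Fin n) (x : (Fin m ⊕ Fin n) → ℝ) :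
    christoffel (twistedMetric g h f) (Sum.inl k) (Sum.inr α) (Sum.inl i) x = 0 := by
  rw [christoffel_symm _ _ (fun y => by simp [twistedMetric])]
  exact chr_C1 hg hh hfpos k i α x

lemma chr_C4 (hg : IsMetric g) (hh : IsMetric h) (hfpos : ∀ x, 0 < f x)
    (γ : Fin n) (i j : Fin m) (x : (Fin m ⊕ Fin n) → ℝ) :
    christoffel (twistedMetric g h f) (Sum.inr γ) (Sum.inl i) (Sum.inl j) x = 0 := by
  unfold christoffel
  rw [Fintype.sum_sum_type]
  simp only [tm_11, tm_21, tinv_21 hg.2.1 hh.2.1 hfpos, pd_const, pd_g_inr hg,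
    zero_mul, mul_zero, add_zero, zero_add, sub_zero, zero_sub, neg_zero,
    Finset.sum_const_zero]

lemma chr_C3 (hg : IsMetric g) (hh : IsMetric h) (hfpos : ∀ x, 0 < f x)
    (k i j : Fin m) (x : (Fin m ⊕ Fin n) → ℝ) :
    christoffel (twistedMetric g h f) (Sum.inl k) (Sum.inl i) (Sum.inl j) x
      = christoffel g k i j (x ∘ Sum.inl) := by
  unfold christoffel
  rw [Fintype.sum_sum_type]
  simp only [tm_11, tm_21, tinv_11 hg.2.1 hh.2.1 hfpos, tinv_12 hg.2.1 hh.2.1 hfpos,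
    pd_g_inl hg, pd_const, zero_mul, mul_zero, Finset.sum_const_zero, add_zero, zero_add,
    sub_zero]

lemma chr_C2 (hg : IsMetric g) (hh : IsMetric h) (hf : ContDiff ℝ (⊤:ℕ∞) f)
    (hfpos : ∀ x, 0 < f x) (γ : Fin n) (i : Fin m) (α : Fin n) (x : (Fin m ⊕ Fin n) → ℝ) :
    christoffel (twistedMetric g h f) (Sum.inr γ) (Sum.inl i) (Sum.inr α) x
      = (if γ = α then 1 else 0) * (pd (Sum.inl i) f x / f x) := by
  have hne : f x ≠ 0 := (hfpos x).ne'
  unfold christoffel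
  rw [Fintype.sum_sum_type]
  simp only [tm_12, tm_21, tm_22, tinv_21 hg.2.1 hh.2.1 hfpos, tinv_22 hg.2.1 hh.2.1 hfpos,
    pd_const, pd_f2h_inl hh hf, zero_mul, mul_zero, add_zero, zero_add, sub_zero,
    Finset.sum_const_zero]
  have key : ∑ δ : Fin n, (h (x ∘ Sum.inr))⁻¹ γ δ * h (x ∘ Sum.inr) δ α
      = if γ = α then 1 else 0 := by
    rw [← Matrix.mul_apply, Matrix.nonsing_inv_mul _ (hh.2.1 _), Matrix.one_apply]
  have e : ∀ δ : Fin n,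
      (f x ^ 2)⁻¹ * (h (x ∘ Sum.inr))⁻¹ γ δ
          * (2 * f x * pd (Sum.inl i) f x * h (x ∘ Sum.inr) δ α)
        = (2 * (pd (Sum.inl i) f x / f x))
          * ((h (x ∘ Sum.inr))⁻¹ γ δ * h (x ∘ Sum.inr) δ α) := by
    intro δ
    field_simp
  rw [Finset.sum_congr rfl (fun δ _ => e δ), ← Finset.mul_sum, key]
  by_cases hγ : γ = α
  · simp only [hγ, if_pos rfl]
    ring
  · simp only [if_neg hγ]
    ring

lemma chr_fun_C1 (hg : IsMetric g) (hh : IsMetric h) (hfpos : ∀ x, 0 < f x)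
    (k i : Fin m) (α : Fin n) :
    christoffel (twistedMetric g h f) (Sum.inl k) (Sum.inl i) (Sum.inr α) = fun _ => (0:ℝ) :=
  funext fun x => chr_C1 hg hh hfpos k i α x

lemma chr_fun_C2 (hg : IsMetric g) (hh : IsMetric h) (hf : ContDiff ℝ (⊤:ℕ∞) f)
    (hfpos : ∀ x, 0 < f x) (γ : Fin n) (i : Fin m) (α : Fin n) :
    christoffel (twistedMetric g h f) (Sum.inr γ) (Sum.inl i) (Sum.inr α)
      = fun x => (if γ = α then 1 else 0) * (pd (Sum.inl i) f x / f x) :=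
  funext fun x => chr_C2 hg hh hf hfpos γ i α x

lemma chr_fun_C3 (hg : IsMetric g) (hh : IsMetric h) (hfpos : ∀ x, 0 < f x)
    (k i j : Fin m) :
    christoffel (twistedMetric g h f) (Sum.inl k) (Sum.inl i) (Sum.inl j)
      = fun y => christoffel g k i j (y ∘ Sum.inl) :=
  funext fun x => chr_C3 hg hh hfpos k i j x

end ChristoffelTwisted

section RicciTwisted

variable {m n : ℕ} {g : (Fin m → ℝ) → Matrix (Fin m) (Fin m) ℝ}
    {h : (Fin n → ℝ) → Matrix (Fin n) (Fin n) ℝ}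
    {f : ((Fin m ⊕ Fin n) → ℝ) → ℝ}

lemma chr_symm_fiber (hh : IsMetric h) (k : Fin m ⊕ Fin n) (α β : Fin n)
    (x : (Fin m ⊕ Fin n) → ℝ) :
    christoffel (twistedMetric g h f) k (Sum.inr β) (Sum.inr α) x
      = christoffel (twistedMetric g h f) k (Sum.inr α) (Sum.inr β) x := by
  apply christoffel_symm
  intro y
  have hs : h (y ∘ Sum.inr) β α = h (y ∘ Sum.inr) α β := by
    have := hh.1 (y ∘ Sum.inr)
    rw [Matrix.IsSymm] at this
    conv_lhs => rw [← this]
    rfl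
  simp [twistedMetric, hs]

lemma quad_zero (hg : IsMetric g) (hh : IsMetric h) (hf : ContDiff ℝ (⊤:ℕ∞) f)
    (hfpos : ∀ x, 0 < f x) (i : Fin m) (α : Fin n) (x : (Fin m ⊕ Fin n) → ℝ) :
    ∑ k : Fin m ⊕ Fin n, ∑ l : Fin m ⊕ Fin n,
      (christoffel (twistedMetric g h f) k k l x
          * christoffel (twistedMetric g h f) l (Sum.inl i) (Sum.inr α) x
        - christoffel (twistedMetric g h f) k (Sum.inr α) l x
          * christoffel (twistedMetric g h f) l (Sum.inl i) k x) = 0 := by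
  rw [Fintype.sum_sum_type]
  have Hl : ∀ a : Fin m, ∑ l : Fin m ⊕ Fin n,
      (christoffel (twistedMetric g h f) (Sum.inl a) (Sum.inl a) l x
          * christoffel (twistedMetric g h f) l (Sum.inl i) (Sum.inr α) x
        - christoffel (twistedMetric g h f) (Sum.inl a) (Sum.inr α) l x
          * christoffel (twistedMetric g h f) l (Sum.inl i) (Sum.inl a) x) = 0 := by
    intro a
    rw [Fintype.sum_sum_type]
    simp only [chr_C1 hg hh hfpos, chr_C1' hg hh hfpos, chr_C4 hg hh hfpos,
      zero_mul, mul_zero, sub_zero, zero_sub, sub_self, neg_zero, Finset.sum_const_zero,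
      add_zero]
  have Hr : ∀ β : Fin n, ∑ l : Fin m ⊕ Fin n,
      (christoffel (twistedMetric g h f) (Sum.inr β) (Sum.inr β) l x
          * christoffel (twistedMetric g h f) l (Sum.inl i) (Sum.inr α) x
        - christoffel (twistedMetric g h f) (Sum.inr β) (Sum.inr α) l x
          * christoffel (twistedMetric g h f) l (Sum.inl i) (Sum.inr β) x) = 0 := by
    intro β
    rw [Fintype.sum_sum_type]
    have lpart : ∀ b : Fin m,
        (christoffel (twistedMetric g h f) (Sum.inr β) (Sum.inr β) (Sum.inl b) x
            * christoffel (twistedMetric g h f) (Sum.inl b) (Sum.inl i) (Sum.inr α) x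
          - christoffel (twistedMetric g h f) (Sum.inr β) (Sum.inr α) (Sum.inl b) x
            * christoffel (twistedMetric g h f) (Sum.inl b) (Sum.inl i) (Sum.inr β) x) = 0 := by
      intro b
      rw [chr_C1 hg hh hfpos, chr_C1 hg hh hfpos]
      ring
    rw [Finset.sum_congr rfl (fun b _ => lpart b), Finset.sum_const_zero, zero_add]
    have rpart : ∀ δ : Fin n,
        (christoffel (twistedMetric g h f) (Sum.inr β) (Sum.inr β) (Sum.inr δ) x
            * christoffel (twistedMetric g h f) (Sum.inr δ) (Sum.inl i) (Sum.inr α) x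
          - christoffel (twistedMetric g h f) (Sum.inr β) (Sum.inr α) (Sum.inr δ) x
            * christoffel (twistedMetric g h f) (Sum.inr δ) (Sum.inl i) (Sum.inr β) x)
        = ((if δ = α then 1 else 0)
              * (christoffel (twistedMetric g h f) (Sum.inr β) (Sum.inr β) (Sum.inr δ) x
                  * (pd (Sum.inl i) f x / f x))
          - (if δ = β then 1 else 0)
              * (christoffel (twistedMetric g h f) (Sum.inr β) (Sum.inr α) (Sum.inr δ) x
                  * (pd (Sum.inl i) f x / f x))) := by
      intro δ
      rw [chr_C2 hg hh hf hfpos, chr_C2 hg hh hf hfpos]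
      ring
    rw [Finset.sum_congr rfl (fun δ _ => rpart δ), Finset.sum_sub_distrib]
    simp only [ite_mul, one_mul, zero_mul]
    rw [Finset.sum_ite_eq' Finset.univ α
        (fun δ => christoffel (twistedMetric g h f) (Sum.inr β) (Sum.inr β) (Sum.inr δ) x
          * (pd (Sum.inl i) f x / f x)),
      Finset.sum_ite_eq' Finset.univ β
        (fun δ => christoffel (twistedMetric g h f) (Sum.inr β) (Sum.inr α) (Sum.inr δ) x
          * (pd (Sum.inl i) f x / f x))]
    simp only [Finset.mem_univ, if_pos]
    rw [chr_symm_fiber hh]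
    ring
  rw [Finset.sum_congr rfl (fun a _ => Hl a), Finset.sum_congr rfl (fun b _ => Hr b)]
  simp

lemma ricci_mixed (hg : IsMetric g) (hh : IsMetric h) (hf : ContDiff ℝ (⊤:ℕ∞) f)
    (hfpos : ∀ x, 0 < f x) (i : Fin m) (α : Fin n) (x : (Fin m ⊕ Fin n) → ℝ) :
    ricci (twistedMetric g h f) (Sum.inl i) (Sum.inr α) x
      = (1 - (n:ℝ)) * pd (Sum.inr α) (fun y => pd (Sum.inl i) f y / f y) x := by
  unfold ricci
  rw [quad_zero hg hh hf hfpos, add_zero, Fintype.sum_sum_type]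
  have t1 : ∀ a : Fin m,
      (pd (Sum.inl a) (christoffel (twistedMetric g h f) (Sum.inl a) (Sum.inl i) (Sum.inr α)) x
        - pd (Sum.inr α)
            (christoffel (twistedMetric g h f) (Sum.inl a) (Sum.inl i) (Sum.inl a)) x) = 0 := by
    intro a
    rw [chr_fun_C1 hg hh hfpos, chr_fun_C3 hg hh hfpos, pd_const,
      pd_inr_comp_left α x (cd_diff (contDiff_christoffel hg a i a) _)]
    ring
  rw [Finset.sum_congr rfl (fun a _ => t1 a), Finset.sum_const_zero, zero_add]
  have t2 : ∀ γ : Fin n,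
      (pd (Sum.inr γ) (christoffel (twistedMetric g h f) (Sum.inr γ) (Sum.inl i) (Sum.inr α)) x
        - pd (Sum.inr α)
            (christoffel (twistedMetric g h f) (Sum.inr γ) (Sum.inl i) (Sum.inr γ)) x)
      = ((if γ = α then 1 else 0) - 1)
          * pd (Sum.inr α) (fun y => pd (Sum.inl i) f y / f y) x := by
    intro γ
    have e3 : christoffel (twistedMetric g h f) (Sum.inr γ) (Sum.inl i) (Sum.inr γ)
        = fun y => pd (Sum.inl i) f y / f y := by
      rw [chr_fun_C2 hg hh hf hfpos]
      funext y
      rw [if_pos rfl, one_mul]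
    rw [e3, chr_fun_C2 hg hh hf hfpos]
    by_cases hγ : γ = α
    · subst hγ
      have e4 : (fun y => (if γ = γ then (1:ℝ) else 0) * (pd (Sum.inl i) f y / f y))
          = fun y => pd (Sum.inl i) f y / f y := by
        funext y
        rw [if_pos rfl, one_mul]
      rw [e4, if_pos rfl]
      ring
    · have e5 : (fun y => (if γ = α then (1:ℝ) else 0) * (pd (Sum.inl i) f y / f y))
          = fun _ => (0:ℝ) := by
        funext y
        rw [if_neg hγ, zero_mul]
      rw [e5, pd_const, if_neg hγ]
      ring
  rw [Finset.sum_congr rfl (fun γ _ => t2 γ)]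
  rw [← Finset.sum_mul, Finset.sum_sub_distrib]
  rw [Finset.sum_ite_eq' Finset.univ α (fun _ => (1:ℝ))]
  simp only [Finset.mem_univ, if_pos, Finset.sum_const, Finset.card_univ, Fintype.card_fin,
    nsmul_eq_mul, mul_one]

end RicciTwisted

section Analysis

variable {m n : ℕ}

def jL : (Fin m → ℝ) →L[ℝ] ((Fin m ⊕ Fin n) → ℝ) :=
  ContinuousLinearMap.pi fun k =>
    Sum.elim (fun i => ContinuousLinearMap.proj i) (fun _ => 0) k
def jR : (Fin n → ℝ) →L[ℝ] ((Fin m ⊕ Fin n) → ℝ) :=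
  ContinuousLinearMap.pi fun k =>
    Sum.elim (fun _ => 0) (fun α => ContinuousLinearMap.proj α) k

lemma jL_apply (u : Fin m → ℝ) : jL (n := n) u = Sum.elim u 0 := by
  funext k
  cases k <;> simp [jL]
lemma jR_apply (v : Fin n → ℝ) : jR (m := m) v = Sum.elim (0 : Fin m → ℝ) v := by
  funext k
  cases k <;> simp [jR]
lemma jL_single (i : Fin m) : jL (n := n) (Pi.single i 1) = Pi.single (Sum.inl i) 1 := by
  funext k
  cases k with
  | inl j => simp [jL, Pi.single_apply]
  | inr β => simp [jL, Pi.single_apply]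
lemma jR_single (α : Fin n) : jR (m := m) (Pi.single α 1) = Pi.single (Sum.inr α) 1 := by
  funext k
  cases k with
  | inl j => simp [jR, Pi.single_apply]
  | inr β => simp [jR, Pi.single_apply]

lemma elim_decomp (u : Fin m → ℝ) (v : Fin n → ℝ) :
    Sum.elim u 0 + Sum.elim (0 : Fin m → ℝ) v = Sum.elim u v := by
  funext k
  cases k <;> simp

lemma clm_eq_zero_of_single {k : ℕ} {L : (Fin k → ℝ) →L[ℝ] ℝ}
    (hs : ∀ i, L (Pi.single i 1) = 0) : L = 0 := by
  apply ContinuousLinearMap.ext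
  intro w
  have hw : w = ∑ i, w i • (Pi.single i 1 : Fin k → ℝ) := by
    funext j
    simp [Pi.single_apply]
  rw [hw, map_sum]
  simp [hs]

lemma const_along_fiber {K : ((Fin m ⊕ Fin n) → ℝ) → ℝ} (hK : ContDiff ℝ (⊤:ℕ∞) K)
    (hz : ∀ x α, pd (Sum.inr α) K x = 0) (u : Fin m → ℝ) (v : Fin n → ℝ) :
    K (Sum.elim u v) = K (Sum.elim u 0) := by
  have hz2 : ∀ x (α : Fin n), fderiv ℝ K x (Pi.single (Sum.inr α) 1) = 0 := hz
  set φ : (Fin n → ℝ) → ℝ := fun v' => K (Sum.elim u 0 + jR v') with hφ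
  have hF : ∀ v', HasFDerivAt φ ((fderiv ℝ K (Sum.elim u 0 + jR v')).comp jR) v' := by
    intro v'
    exact ((cd_diff hK _).hasFDerivAt).comp v' ((jR.hasFDerivAt).const_add _)
  have hz' : ∀ v', fderiv ℝ φ v' = 0 := by
    intro v'
    rw [(hF v').fderiv]
    apply clm_eq_zero_of_single
    intro α
    rw [ContinuousLinearMap.comp_apply, jR_single]
    exact hz2 _ α
  have hco := is_const_of_fderiv_eq_zero (fun v' => (hF v').differentiableAt) hz' v 0
  simp only [hφ, jR_apply, map_zero, add_zero] at hco
  rw [elim_decomp] at hco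
  rw [show (Sum.elim (0 : Fin m → ℝ) (0 : Fin n → ℝ)) = (0 : (Fin m ⊕ Fin n) → ℝ) from
    by funext k; cases k <;> rfl, add_zero] at hco
  exact hco

lemma const_along_base_sub {P : ((Fin m ⊕ Fin n) → ℝ) → ℝ} (hP : ContDiff ℝ (⊤:ℕ∞) P)
    (v : Fin n → ℝ)
    (hz : ∀ (i : Fin m) (u : Fin m → ℝ),
      pd (Sum.inl i) P (Sum.elim u v) = pd (Sum.inl i) P (Sum.elim u 0)) (u : Fin m → ℝ) :
    P (Sum.elim u v) - P (Sum.elim u 0) = P (Sum.elim (0 : Fin m → ℝ) v) - P (Sum.elim (0 : Fin m → ℝ) (0 : Fin n → ℝ)) := by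
  set G : (Fin m → ℝ) → ℝ := fun u' => P (jL u' + Sum.elim (0 : Fin m → ℝ) v) - P (jL u') with hG
  have hF : ∀ u', HasFDerivAt G
      (((fderiv ℝ P (jL u' + Sum.elim (0 : Fin m → ℝ) v)).comp jL) - ((fderiv ℝ P (jL u')).comp jL)) u' := by
    intro u'
    exact (((cd_diff hP _).hasFDerivAt).comp u' ((jL.hasFDerivAt).add_const _)).sub
      (((cd_diff hP _).hasFDerivAt).comp u' (jL.hasFDerivAt))
  have hz' : ∀ u', fderiv ℝ G u' = 0 := by
    intro u'
    rw [(hF u').fderiv]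
    apply clm_eq_zero_of_single
    intro i
    have e1 : jL u' + Sum.elim (0 : Fin m → ℝ) v = Sum.elim u' v := by
      rw [jL_apply, elim_decomp]
    have e2 : jL (n := n) u' = Sum.elim u' 0 := jL_apply u'
    rw [ContinuousLinearMap.sub_apply, ContinuousLinearMap.comp_apply,
      ContinuousLinearMap.comp_apply, jL_single, e1, e2]
    have := hz i u'
    simp only [pd] at this
    rw [this, sub_self]
  have hco := is_const_of_fderiv_eq_zero (fun u' => (hF u').differentiableAt) hz' u 0
  simp only [hG, jL_apply, map_zero] at hco
  rw [elim_decomp] at hco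
  simpa using hco

lemma pd_log {ι : Type*} [Fintype ι] [DecidableEq ι] {φ : (ι → ℝ) → ℝ} {x : ι → ℝ}
    (hφ : DifferentiableAt ℝ φ x) (h0 : φ x ≠ 0) (i : ι) :
    pd i (fun y => Real.log (φ y)) x = pd i φ x / φ x := by
  have H : HasFDerivAt (fun y => Real.log (φ y)) ((φ x)⁻¹ • fderiv ℝ φ x) x :=
    (Real.hasDerivAt_log h0).comp_hasFDerivAt x hφ.hasFDerivAt
  rw [pd, H.fderiv]
  simp [pd, smul_eq_mul, div_eq_inv_mul]

end Analysis

/-- for a twisted product with `dim M₂ > 1`, the mixed Ricci components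
vanish iff the twisting function splits as `f = ψ · e^{η/2}` with `ψ` on `M₁` and `η`
on `M₂`, i.e. iff `M₁ ×_f M₂` is a warped product `M₁ ×_ψ M₂` over a metric
`h̃ = e^η h` conformal to `h`. -/
theorem twisted_is_warped_iff_mixed_ricci_zero {m n : ℕ}
    (g : (Fin m → ℝ) → Matrix (Fin m) (Fin m) ℝ)
    (h : (Fin n → ℝ) → Matrix (Fin n) (Fin n) ℝ)
    (f : ((Fin m ⊕ Fin n) → ℝ) → ℝ)
    (hg : IsMetric g) (hh : IsMetric h)
    (hf : ContDiff ℝ (⊤ : ℕ∞) f) (hfpos : ∀ x, 0 < f x) (hn : 1 < n) :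
    (∀ (x : (Fin m ⊕ Fin n) → ℝ) (i : Fin m) (α : Fin n),
        ricci (twistedMetric g h f) (Sum.inl i) (Sum.inr α) x = 0)
      ↔ ∃ ψ : (Fin m → ℝ) → ℝ, ∃ η : (Fin n → ℝ) → ℝ,
          ContDiff ℝ (⊤ : ℕ∞) ψ ∧ ContDiff ℝ (⊤ : ℕ∞) η ∧ (∀ u, 0 < ψ u) ∧
          ∀ x : (Fin m ⊕ Fin n) → ℝ,
            f x = ψ (x ∘ Sum.inl) * Real.exp (η (x ∘ Sum.inr) / 2) := by
  constructor
  · intro hric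
    have hfne : ∀ y, f y ≠ 0 := fun y => (hfpos y).ne'
    have hD : ∀ (x : (Fin m ⊕ Fin n) → ℝ) (i : Fin m) (α : Fin n),
        pd (Sum.inr α) (fun y => pd (Sum.inl i) f y / f y) x = 0 := by
      intro x i α
      have hr := hric x i α
      rw [ricci_mixed hg hh hf hfpos] at hr
      have hne : (1 - (n:ℝ)) ≠ 0 := by
        have h1 : (1:ℝ) < (n:ℝ) := by exact_mod_cast hn
        linarith
      rcases mul_eq_zero.mp hr with h' | h'
      · exact absurd h' hne
      · exact h'
    set P : ((Fin m ⊕ Fin n) → ℝ) → ℝ := fun y => Real.log (f y) with hPdef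
    have hPc : ContDiff ℝ (⊤:ℕ∞) P := hf.log hfne
    have hPdiv : ∀ i : Fin m, pd (Sum.inl i) P = fun y => pd (Sum.inl i) f y / f y := by
      intro i
      funext y
      exact pd_log (cd_diff hf y) (hfne y) _
    have hmix : ∀ (i : Fin m) (x) (α : Fin n), pd (Sum.inr α) (pd (Sum.inl i) P) x = 0 := by
      intro i x α
      rw [hPdiv i]
      exact hD x i α
    have hKconst : ∀ (i : Fin m) (u : Fin m → ℝ) (v : Fin n → ℝ),
        pd (Sum.inl i) P (Sum.elim u v) = pd (Sum.inl i) P (Sum.elim u 0) :=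
      fun i u v => const_along_fiber (contDiff_pd hPc _) (hmix i) u v
    have key : ∀ (u : Fin m → ℝ) (v : Fin n → ℝ),
        P (Sum.elim u v) - P (Sum.elim u 0)
          = P (Sum.elim (0 : Fin m → ℝ) v) - P (Sum.elim (0 : Fin m → ℝ) (0 : Fin n → ℝ)) :=
      fun u v => const_along_base_sub hPc v (fun i u' => hKconst i u' v) u
    refine ⟨fun u => f (Sum.elim u 0),
      fun v => 2 * (P (Sum.elim (0 : Fin m → ℝ) v)
        - P (Sum.elim (0 : Fin m → ℝ) (0 : Fin n → ℝ))), ?_, ?_, ?_, ?_⟩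
    · have e : (fun u : Fin m → ℝ => f (Sum.elim u 0)) = fun u => f (jL u) := by
        funext u
        rw [jL_apply]
      rw [e]
      exact hf.comp jL.contDiff
    · have e : (fun v : Fin n → ℝ => 2 * (P (Sum.elim (0 : Fin m → ℝ) v)
            - P (Sum.elim (0 : Fin m → ℝ) (0 : Fin n → ℝ))))
          = fun v => 2 * (P (jR v) - P (Sum.elim (0 : Fin m → ℝ) (0 : Fin n → ℝ))) := by
        funext v
        rw [jR_apply]
      rw [e]
      exact contDiff_const.mul ((hPc.comp jR.contDiff).sub contDiff_const)
    · intro u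
      exact hfpos _
    · intro x
      have hx : x = Sum.elim (x ∘ Sum.inl) (x ∘ Sum.inr) := by
        funext k
        cases k <;> rfl
      have hkey := key (x ∘ Sum.inl) (x ∘ Sum.inr)
      have e1 : f x = Real.exp (P (Sum.elim (x ∘ Sum.inl) (x ∘ Sum.inr))) := by
        conv_lhs => rw [hx]
        exact (Real.exp_log (hfpos _)).symm
      have e2 : f (Sum.elim (x ∘ Sum.inl) (0 : Fin n → ℝ))
          = Real.exp (P (Sum.elim (x ∘ Sum.inl) (0 : Fin n → ℝ))) :=
        (Real.exp_log (hfpos _)).symm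
      have e3 : (2 * (P (Sum.elim (0 : Fin m → ℝ) (x ∘ Sum.inr))
            - P (Sum.elim (0 : Fin m → ℝ) (0 : Fin n → ℝ)))) / 2
          = P (Sum.elim (0 : Fin m → ℝ) (x ∘ Sum.inr))
            - P (Sum.elim (0 : Fin m → ℝ) (0 : Fin n → ℝ)) := by
        ring
      beta_reduce
      rw [e1, e2, e3, ← Real.exp_add]
      congr 1
      linarith [hkey]
  · rintro ⟨ψ, η, hψc, hηc, hψpos, hsplit⟩
    intro x i α
    rw [ricci_mixed hg hh hf hfpos]
    have hfeq : f = fun y => ψ (y ∘ Sum.inl) * Real.exp (η (y ∘ Sum.inr) / 2) := funext hsplit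
    have hEc : ContDiff ℝ (⊤:ℕ∞) fun v : Fin n → ℝ => Real.exp (η v / 2) :=
      Real.contDiff_exp.comp (hηc.div_const 2)
    have hquot : (fun y => pd (Sum.inl i) f y / f y)
        = fun y => pd i ψ (y ∘ Sum.inl) / ψ (y ∘ Sum.inl) := by
      funext y
      have hdψ : DifferentiableAt ℝ (fun z : (Fin m ⊕ Fin n) → ℝ => ψ (z ∘ Sum.inl)) y :=
        DifferentiableAt.comp y (cd_diff hψc (y ∘ Sum.inl)) prL.differentiableAt
      have hdE : DifferentiableAt ℝ
          (fun z : (Fin m ⊕ Fin n) → ℝ => Real.exp (η (z ∘ Sum.inr) / 2)) y := by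
        have hcomp := DifferentiableAt.comp (g := fun v : Fin n → ℝ => Real.exp (η v / 2))
          (f := fun z : (Fin m ⊕ Fin n) → ℝ => prR z) y (cd_diff hEc (prR y))
          prR.differentiableAt
        exact hcomp
      have hpdf : pd (Sum.inl i) f y
          = pd i ψ (y ∘ Sum.inl) * Real.exp (η (y ∘ Sum.inr) / 2) := by
        conv_lhs => rw [hfeq]
        rw [pd_mul _ _ hdψ hdE, pd_inl_comp i y (cd_diff hψc _),
          pd_inl_comp_right i y (cd_diff hEc _), mul_zero, add_zero]
      rw [hpdf, hsplit y, mul_div_mul_right _ _ (Real.exp_ne_zero _)]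
    rw [hquot, pd_inr_comp_left (F := fun u => pd i ψ u / ψ u) α x
      (cd_diff ((contDiff_pd hψc i).div hψc fun u => (hψpos u).ne') _), mul_zero]
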